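/- arXiv:2208.09534 — 6 statements merged into one kernel-verified Lean document; each statement's English description precedes it below -/
import Mathlib

section
/- If a random variable ξ has a density q bounded by M > 0 and finite variance σ², then M ≥ 1/(12σ). In other words, the essential supremum of the density of any random variable with standard deviation σ is at least 1/(12σ). -/
/-!
A density bounded by `M` puts mass at most `2 t M` on any interval of length `2 t`, while
Chebyshev's inequality puts mass at most `σ² / t²` outside the interval of radius `t` around the
mean. Both masses add up to `1`, so `1 ≤ 2 t M + σ² / t²`; at `t = 2 σ` this reads
`1 ≤ 4 σ M + 1 / 4`, i.e. `σ M ≥ 3 / 16 ≥ 1 / 12`.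
-/

open MeasureTheory ProbabilityTheory Set

lemma withDensity_ofReal_le_smul_of_ae_le {α : Type*} [MeasurableSpace α] {μ : Measure α}
    {f : α → ℝ} {M : ℝ} (hf : ∀ᵐ x ∂μ, f x ≤ M) :
    μ.withDensity (fun x => ENNReal.ofReal (f x)) ≤ ENNReal.ofReal M • μ := by
  rw [← withDensity_const]
  exact withDensity_mono (hf.mono fun _ hx => ENNReal.ofReal_le_ofReal hx)

section BoundedDensity

variable {Ω : Type*} [MeasurableSpace Ω] {P : Measure Ω} {ξ : Ω → ℝ} {q : ℝ → ℝ} {M : ℝ}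

lemma measureReal_abs_sub_lt_le_of_density_le (hM : 0 ≤ M)
    (hmeas : Measurable ξ)
    (hdens : P.map ξ = (volume : Measure ℝ).withDensity (fun x => ENNReal.ofReal (q x)))
    (hqM : ∀ᵐ x ∂(volume : Measure ℝ), q x ≤ M) (c : ℝ) {t : ℝ} (ht : 0 ≤ t) :
    P.real {ω | |ξ ω - c| < t} ≤ 2 * t * M := by
  have hpreimage : {ω | |ξ ω - c| < t} = ξ ⁻¹' Ioo (c - t) (c + t) := by
    ext ω
    simp only [mem_ofPred_eq, mem_preimage, mem_Ioo, abs_sub_lt_iff]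
    constructor <;> rintro ⟨h₁, h₂⟩ <;> constructor <;> linarith
  refine ENNReal.toReal_le_of_le_ofReal (by positivity) ?_
  calc P {ω | |ξ ω - c| < t} = P.map ξ (Ioo (c - t) (c + t)) := by
        rw [hpreimage, Measure.map_apply hmeas measurableSet_Ioo]
    _ ≤ (ENNReal.ofReal M • volume) (Ioo (c - t) (c + t)) :=
        hdens ▸ withDensity_ofReal_le_smul_of_ae_le hqM _
    _ = ENNReal.ofReal (2 * t * M) := by
        rw [Measure.smul_apply, Real.volume_Ioo, smul_eq_mul, ← ENNReal.ofReal_mul hM]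
        ring_nf

lemma one_le_two_mul_mul_add_variance_div_sq_of_density_le [IsProbabilityMeasure P]
    (hM : 0 ≤ M) (hmeas : Measurable ξ)
    (hdens : P.map ξ = (volume : Measure ℝ).withDensity (fun x => ENNReal.ofReal (q x)))
    (hqM : ∀ᵐ x ∂(volume : Measure ℝ), q x ≤ M) (hL2 : MemLp ξ 2 P) {t : ℝ} (ht : 0 < t) :
    1 ≤ 2 * t * M + variance ξ P / t ^ 2 := by
  have hnear := measureReal_abs_sub_lt_le_of_density_le hM hmeas hdens hqM P[ξ] ht.le
  have hfar : P.real {ω | t ≤ |ξ ω - P[ξ]|} ≤ variance ξ P / t ^ 2 :=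
    ENNReal.toReal_le_of_le_ofReal (div_nonneg (variance_nonneg ξ P) (sq_nonneg t))
      (meas_ge_le_variance_div_sq hL2 ht)
  have hcompl : {ω | |ξ ω - P[ξ]| < t}ᶜ = {ω | t ≤ |ξ ω - P[ξ]|} := by
    ext ω
    simp
  have hsplit := measureReal_add_measureReal_compl (μ := P) (s := {ω | |ξ ω - P[ξ]| < t})
    (measurableSet_lt (hmeas.sub_const P[ξ]).abs measurable_const)
  rw [hcompl, probReal_univ] at hsplit
  linarith

end BoundedDensity

/-- If a random variable `ξ` has a density `q` bounded by `M > 0` and finite positive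
variance `σ²`, then `M ≥ 1/(12 σ)`. -/
theorem stmt_0 {Ω : Type*} [MeasurableSpace Ω] {P : Measure Ω} [IsProbabilityMeasure P]
    (ξ : Ω → ℝ) (q : ℝ → ℝ) (M : ℝ) (hM : 0 < M)
    (hmeas : Measurable ξ)
    (hdens : Measure.map ξ P =
      (volume : Measure ℝ).withDensity (fun x => ENNReal.ofReal (q x)))
    (hqM : ∀ᵐ x ∂(volume : Measure ℝ), q x ≤ M)
    (hL2 : MemLp ξ 2 P)
    (hvar : 0 < variance ξ P) :
    1 / (12 * Real.sqrt (variance ξ P)) ≤ M := by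
  set σ := Real.sqrt (variance ξ P)
  have hσ : 0 < σ := Real.sqrt_pos.2 hvar
  have hbound := one_le_two_mul_mul_add_variance_div_sq_of_density_le hM.le hmeas hdens hqM hL2
    (mul_pos two_pos hσ)
  have hratio : variance ξ P / (2 * σ) ^ 2 = 1 / 4 := by
    rw [mul_pow, Real.sq_sqrt hvar.le]
    field_simp
    norm_num
  rw [div_le_iff₀ (by positivity)]
  linarith
end

section
/- Let X be a random variable with E e^{α|X|} ≤ 2 for some α > 0, and let f(z) = E e^{izX} be its (analytic) characteristic function. Then for all complex z with |z| ≤ α/2 one has |f'(z)| ≤ 4/(αe) and |f(z) − 1| ≤ 2/e. -/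
/-!
Every bound comes from the elementary inequality `y e^{-y} ≤ e^{-1}`, in the form
`t e^{st} ≤ e^{(s+c)t} / (c e)`: it trades a factor `|X|` for a loss of `c` in the exponent.
With `‖z‖ ≤ α/2` the integrands of `f'(z) = E[iX e^{izX}]` and of `f(z) - 1 = E[e^{izX} - 1]`
are bounded by `|X| e^{α|X|/2} ≤ (2/(αe)) e^{α|X|}` and `(α/2)|X| e^{α|X|/2} ≤ e^{-1} e^{α|X|}`,
so the hypothesis `E e^{α|X|} ≤ 2` gives the two estimates. Differentiation under the integral
sign is dominated in the same way, on a ball around `z` of radius `(α - ‖z‖)/2`.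
-/

open MeasureTheory ProbabilityTheory

lemma mul_exp_mul_le_exp_add_mul {c : ℝ} (s t : ℝ) (hc : 0 < c) :
    t * Real.exp (s * t) ≤ Real.exp ((s + c) * t) / (c * Real.exp 1) := by
  have h := Real.mul_exp_neg_le_exp_neg_one (c * t)
  rw [le_div_iff₀ (by positivity)]
  calc t * Real.exp (s * t) * (c * Real.exp 1)
      = c * t * Real.exp (-(c * t)) * Real.exp ((s + c) * t) * Real.exp 1 := by
        rw [mul_assoc (c * t), ← Real.exp_add]; ring_nf
    _ ≤ Real.exp (-1) * Real.exp ((s + c) * t) * Real.exp 1 := by gcongr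
    _ = Real.exp ((s + c) * t) := by rw [mul_right_comm, ← Real.exp_add]; simp

lemma norm_cexp_I_mul_ofReal_le (z : ℂ) (x : ℝ) :
    ‖Complex.exp (Complex.I * z * x)‖ ≤ Real.exp (‖z‖ * |x|) :=
  (Complex.norm_exp_le_exp_norm _).trans_eq (by simp)

lemma norm_cexp_I_mul_ofReal_mul_le (z : ℂ) (x : ℝ) :
    ‖Complex.exp (Complex.I * z * x) * (Complex.I * x)‖ ≤ |x| * Real.exp (‖z‖ * |x|) := by
  rw [norm_mul, mul_comm]
  simp only [norm_mul, Complex.norm_I, Complex.norm_real, Real.norm_eq_abs, one_mul]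
  gcongr
  exact norm_cexp_I_mul_ofReal_le z x

lemma norm_cexp_I_mul_ofReal_sub_one_le (z : ℂ) (x : ℝ) :
    ‖Complex.exp (Complex.I * z * x) - 1‖ ≤ ‖z‖ * (|x| * Real.exp (‖z‖ * |x|)) := by
  have h := Complex.norm_exp_sub_sum_le_norm_mul_exp (Complex.I * z * x) 1
  simp only [Finset.range_one, Finset.sum_singleton, pow_zero, Nat.factorial_zero,
    Nat.cast_one, div_one, pow_one] at h
  have hw : ‖Complex.I * z * x‖ = ‖z‖ * |x| := by simp
  rw [hw] at h
  linarith

lemma norm_integral_le_of_norm_le_mul {Ω E : Type*} [MeasurableSpace Ω] {P : Measure Ω}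
    [NormedAddCommGroup E] [NormedSpace ℝ E] {F : Ω → E} {g : Ω → ℝ} {B : ENNReal} {C : ℝ}
    (hC : 0 ≤ C) (hB : B ≠ ⊤) (hg : ∫⁻ ω, ENNReal.ofReal (g ω) ∂P ≤ B)
    (hF : ∀ ω, ‖F ω‖ ≤ C * g ω) :
    ‖∫ ω, F ω ∂P‖ ≤ C * B.toReal := by
  have hlint : ∫⁻ ω, ENNReal.ofReal ‖F ω‖ ∂P ≤ ENNReal.ofReal C * B :=
    calc ∫⁻ ω, ENNReal.ofReal ‖F ω‖ ∂P ≤ ∫⁻ ω, ENNReal.ofReal C * ENNReal.ofReal (g ω) ∂P :=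
          lintegral_mono fun ω => by
            rw [← ENNReal.ofReal_mul hC]; exact ENNReal.ofReal_le_ofReal (hF ω)
      _ = ENNReal.ofReal C * ∫⁻ ω, ENNReal.ofReal (g ω) ∂P :=
          lintegral_const_mul' _ _ ENNReal.ofReal_ne_top
      _ ≤ ENNReal.ofReal C * B := by gcongr
  calc ‖∫ ω, F ω ∂P‖ ≤ (∫⁻ ω, ENNReal.ofReal ‖F ω‖ ∂P).toReal := norm_integral_le_lintegral_norm F
    _ ≤ (ENNReal.ofReal C * B).toReal := ENNReal.toReal_mono (by finiteness) hlint
    _ = C * B.toReal := by rw [ENNReal.toReal_mul, ENNReal.toReal_ofReal hC]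

section

variable {Ω : Type*} [MeasurableSpace Ω] {P : Measure Ω} {X : Ω → ℝ} {α : ℝ}

lemma integrable_exp_mul_abs (hX : Measurable X)
    (hexp : ∫⁻ ω, ENNReal.ofReal (Real.exp (α * |X ω|)) ∂P ≠ ⊤) :
    Integrable (fun ω => Real.exp (α * |X ω|)) P := by
  refine ⟨by fun_prop, ?_⟩
  rwa [hasFiniteIntegral_iff_ofReal (ae_of_all _ fun ω => (Real.exp_pos _).le), lt_top_iff_ne_top]

variable (hX : Measurable X) (hint : Integrable (fun ω => Real.exp (α * |X ω|)) P)
include hX hint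

lemma integrable_cexp_I_mul {z : ℂ} (hz : ‖z‖ ≤ α) :
    Integrable (fun ω => Complex.exp (Complex.I * z * X ω)) P :=
  hint.mono (by fun_prop) (ae_of_all _ fun ω => (norm_cexp_I_mul_ofReal_le z (X ω)).trans <| by
    rw [Real.norm_of_nonneg (Real.exp_pos _).le]; gcongr)

lemma hasDerivAt_integral_cexp_I_mul {z : ℂ} (hz : ‖z‖ < α) :
    HasDerivAt (fun z => ∫ ω, Complex.exp (Complex.I * z * X ω) ∂P)
      (∫ ω, Complex.exp (Complex.I * z * X ω) * (Complex.I * X ω) ∂P) z := by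
  set δ := (α - ‖z‖) / 2
  have hδ : 0 < δ := by simp only [δ]; linarith
  refine (hasDerivAt_integral_of_dominated_loc_of_deriv_le (Metric.ball_mem_nhds z hδ)
    (F := fun z ω => Complex.exp (Complex.I * z * X ω))
    (F' := fun z ω => Complex.exp (Complex.I * z * X ω) * (Complex.I * X ω))
    (bound := fun ω => Real.exp (α * |X ω|) / (δ * Real.exp 1))
    (Filter.Eventually.of_forall fun y => by fun_prop) (integrable_cexp_I_mul hX hint hz.le)
    (by fun_prop) ?_ (hint.div_const _) ?_).2
  · refine ae_of_all _ fun ω y hy => ?_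
    have hy : ‖y‖ ≤ ‖z‖ + δ := by
      have := norm_le_norm_add_norm_sub' y z
      rw [Metric.mem_ball, dist_eq_norm] at hy
      linarith
    calc ‖Complex.exp (Complex.I * y * X ω) * (Complex.I * X ω)‖
        ≤ |X ω| * Real.exp ((‖z‖ + δ) * |X ω|) :=
          (norm_cexp_I_mul_ofReal_mul_le y (X ω)).trans (by gcongr)
      _ ≤ Real.exp (α * |X ω|) / (δ * Real.exp 1) := by
          convert mul_exp_mul_le_exp_add_mul (‖z‖ + δ) |X ω| hδ using 3
          simp only [δ]; ring
  · exact ae_of_all _ fun ω y _ => (((hasDerivAt_id y).const_mul Complex.I).mul_const _).cexp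
      |>.congr_deriv (by simp)

end

/-- If `E e^{α|X|} ≤ 2` (`α > 0`) and `f(z) = E e^{izX}` is the analytic characteristic
function of `X`, then for all `|z| ≤ α/2` one has `|f'(z)| ≤ 4/(αe)` and `|f(z) − 1| ≤ 2/e`. -/
theorem stmt_5 {Ω : Type*} [MeasurableSpace Ω] {P : Measure Ω} [IsProbabilityMeasure P]
    (X : Ω → ℝ) (hmeas : Measurable X) (α : ℝ) (hα : 0 < α)
    (hexp : ∫⁻ ω, ENNReal.ofReal (Real.exp (α * |X ω|)) ∂P ≤ 2)
    (f : ℂ → ℂ)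
    (hf : ∀ z : ℂ, f z = ∫ ω, Complex.exp (Complex.I * z * X ω) ∂P) :
    ∀ z : ℂ, ‖z‖ ≤ α / 2 →
      ‖deriv f z‖ ≤ 4 / (α * Real.exp 1) ∧ ‖f z - 1‖ ≤ 2 / Real.exp 1 := by
  intro z hz
  have hint := integrable_exp_mul_abs hmeas (hexp.trans_lt (by norm_num)).ne
  have hderiv : deriv f z = ∫ ω, Complex.exp (Complex.I * z * X ω) * (Complex.I * X ω) ∂P := by
    rw [funext hf]
    exact (hasDerivAt_integral_cexp_I_mul hmeas hint (by linarith)).deriv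
  have hmoment : ∀ ω, |X ω| * Real.exp (‖z‖ * |X ω|)
      ≤ 2 / (α * Real.exp 1) * Real.exp (α * |X ω|) := fun ω =>
    calc |X ω| * Real.exp (‖z‖ * |X ω|) ≤ |X ω| * Real.exp (α / 2 * |X ω|) := by gcongr
      _ ≤ Real.exp ((α / 2 + α / 2) * |X ω|) / (α / 2 * Real.exp 1) :=
        mul_exp_mul_le_exp_add_mul _ _ (half_pos hα)
      _ = 2 / (α * Real.exp 1) * Real.exp (α * |X ω|) := by field_simp; ring_nf
  have hsub : f z - 1 = ∫ ω, (Complex.exp (Complex.I * z * X ω) - 1) ∂P := by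
    rw [hf z, integral_sub (integrable_cexp_I_mul hmeas hint (by linarith)) (integrable_const 1)]
    simp
  constructor
  · rw [hderiv]
    calc _ ≤ 2 / (α * Real.exp 1) * (2 : ENNReal).toReal :=
          norm_integral_le_of_norm_le_mul (by positivity) (by simp) hexp fun ω =>
            (norm_cexp_I_mul_ofReal_mul_le z (X ω)).trans (hmoment ω)
      _ = 4 / (α * Real.exp 1) := by rw [ENNReal.toReal_ofNat]; ring
  · rw [hsub]
    calc _ ≤ α / 2 * (2 / (α * Real.exp 1)) * (2 : ENNReal).toReal :=
          norm_integral_le_of_norm_le_mul (by positivity) (by simp) hexp fun ω =>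
            (norm_cexp_I_mul_ofReal_sub_one_le z (X ω)).trans <| by
              rw [mul_assoc]; exact mul_le_mul hz (hmoment ω) (by positivity) (by positivity)
      _ = 2 / Real.exp 1 := by field_simp; norm_num
end

section
/- Let X satisfy E e^{α|X|} ≤ 2 (α > 0) and let K(z) = log E e^{zX} be its log-Laplace transform, analytic in |z| ≤ α/2. Then for every integer k ≥ 1 and all complex z with |z| ≤ α/4, one has |K^{(k)}(z)| ≤ 3 k! (4/α)^k. -/
/-!
For `‖w‖ ≤ α/2` the pointwise bound `|e^{wx} - 1| ≤ |wx| e^{|wx|} ≤ e^{-1} e^{α|x|}` gives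
`|E e^{wX} - 1| ≤ 2/e < 3/4`, so `K = log E e^{wX}` is holomorphic on that disc and bounded by `3`
there. Cauchy's estimate on the disc of radius `α/4` around `z`, which lies inside it, finishes.
-/

open MeasureTheory ProbabilityTheory Metric
open scoped Complex Real

lemma Complex.norm_exp_sub_one_le_mul_exp_norm (w : ℂ) : ‖cexp w - 1‖ ≤ ‖w‖ * rexp ‖w‖ := by
  have hderiv : ∀ u ∈ closedBall (0 : ℂ) ‖w‖, ‖deriv cexp u‖ ≤ rexp ‖w‖ := fun u hu ↦ by
    rw [Complex.deriv_exp]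
    exact (Complex.norm_exp_le_exp_norm u).trans
      (Real.exp_le_exp.2 (mem_closedBall_zero_iff.1 hu))
  simpa [mul_comm] using (convex_closedBall (0 : ℂ) ‖w‖).norm_image_sub_le_of_norm_deriv_le
    (fun u _ ↦ Complex.differentiableAt_exp) hderiv (mem_closedBall_self (norm_nonneg w))
    (mem_closedBall_zero_iff.2 le_rfl)

lemma Real.exp_mul_le_exp_mul_abs {t α : ℝ} (ht : |t| ≤ α) (x : ℝ) :
    rexp (t * x) ≤ rexp (α * |x|) := by
  refine Real.exp_le_exp.2 ?_
  calc t * x ≤ |t * x| := le_abs_self _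
    _ = |t| * |x| := abs_mul t x
    _ ≤ α * |x| := by gcongr

-- `s e^{-s} ≤ e^{-1}` with `s = ‖w x‖ ≤ α|x|/2` leaves the factor `e^{2s} ≤ e^{α|x|}`.
lemma norm_cexp_mul_sub_one_le {α : ℝ} {w : ℂ} (hw : ‖w‖ ≤ α / 2) (x : ℝ) :
    ‖cexp (w * x) - 1‖ ≤ rexp (-1) * rexp (α * |x|) := by
  have hs : ‖w * x‖ ≤ α / 2 * |x| := by
    rw [norm_mul, Complex.norm_real, Real.norm_eq_abs]
    gcongr
  calc ‖cexp (w * x) - 1‖ ≤ ‖w * x‖ * rexp ‖w * x‖ := Complex.norm_exp_sub_one_le_mul_exp_norm _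
    _ = ‖w * x‖ * rexp (-‖w * x‖) * rexp (2 * ‖w * x‖) := by
      rw [mul_assoc, ← Real.exp_add]; ring_nf
    _ ≤ rexp (-1) * rexp (α * |x|) :=
      mul_le_mul (Real.mul_exp_neg_le_exp_neg_one _) (Real.exp_le_exp.2 (by linarith))
        (by positivity) (by positivity)

lemma Complex.norm_log_le_three_of_norm_sub_one_le {u : ℂ} (hu : ‖u - 1‖ ≤ 3 / 4) :
    ‖Complex.log u‖ ≤ 3 := by
  have hlog := Complex.norm_log_one_add_le (z := u - 1) (by linarith)
  rw [add_sub_cancel] at hlog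
  have hinv : (1 - ‖u - 1‖)⁻¹ ≤ 4 := by
    rw [inv_le_comm₀ (by linarith) (by norm_num)]
    linarith
  nlinarith [norm_nonneg (u - 1)]

section ExpAbsIntegrable

variable {Ω : Type*} [MeasurableSpace Ω] {μ : Measure Ω} {X : Ω → ℝ} {α : ℝ}

lemma integrable_and_integral_le_of_lintegral_ofReal_le {f : Ω → ℝ}
    (hf : AEStronglyMeasurable f μ) (hf0 : 0 ≤ᵐ[μ] f) {c : ENNReal}
    (h : ∫⁻ ω, ENNReal.ofReal (f ω) ∂μ ≤ c) (hc : c ≠ ⊤) :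
    Integrable f μ ∧ ∫ ω, f ω ∂μ ≤ c.toReal :=
  ⟨⟨hf, (hasFiniteIntegral_iff_ofReal hf0).2 (h.trans_lt hc.lt_top)⟩,
    integral_eq_lintegral_of_nonneg_ae hf0 hf ▸ ENNReal.toReal_mono hc h⟩

lemma integrable_exp_mul_of_integrable_exp_mul_abs (hX : AEMeasurable X μ)
    (hint : Integrable (fun ω ↦ rexp (α * |X ω|)) μ) {t : ℝ} (ht : |t| ≤ α) :
    Integrable (fun ω ↦ rexp (t * X ω)) μ := by
  refine hint.mono (by fun_prop) (ae_of_all _ fun ω ↦ ?_)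
  simp only [Real.norm_eq_abs, Real.abs_exp]
  exact Real.exp_mul_le_exp_mul_abs ht (X ω)

lemma Ioo_subset_interior_integrableExpSet (hX : AEMeasurable X μ)
    (hint : Integrable (fun ω ↦ rexp (α * |X ω|)) μ) :
    Set.Ioo (-α) α ⊆ interior (integrableExpSet X μ) :=
  interior_maximal (fun _ ht ↦ integrable_exp_mul_of_integrable_exp_mul_abs hX hint
    (abs_le.2 ⟨ht.1.le, ht.2.le⟩)) isOpen_Ioo

lemma differentiableOn_complexMGF_closedBall (hX : AEMeasurable X μ)
    (hint : Integrable (fun ω ↦ rexp (α * |X ω|)) μ) {r : ℝ} (hr : r < α) :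
    DifferentiableOn ℂ (complexMGF X μ) (closedBall 0 r) := by
  refine differentiableOn_complexMGF.mono fun w hw ↦
    Ioo_subset_interior_integrableExpSet hX hint (abs_lt.1 ?_)
  exact (Complex.abs_re_le_norm w).trans_lt ((mem_closedBall_zero_iff.1 hw).trans_lt hr)

lemma norm_complexMGF_sub_one_le [IsProbabilityMeasure μ] (hX : AEMeasurable X μ)
    (hint : Integrable (fun ω ↦ rexp (α * |X ω|)) μ) {w : ℂ} (hw : ‖w‖ ≤ α / 2) :
    ‖complexMGF X μ w - 1‖ ≤ rexp (-1) * ∫ ω, rexp (α * |X ω|) ∂μ := by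
  have hre : |w.re| ≤ α := by linarith [Complex.abs_re_le_norm w, norm_nonneg w]
  have hcexp : Integrable (fun ω ↦ cexp (w * X ω)) μ :=
    integrable_cexp_mul_of_re_mem_integrableExpSet hX
      (integrable_exp_mul_of_integrable_exp_mul_abs hX hint hre)
  have hsub : complexMGF X μ w - 1 = ∫ ω, (cexp (w * X ω) - 1) ∂μ := by
    simp [complexMGF, integral_sub hcexp (integrable_const 1)]
  calc ‖complexMGF X μ w - 1‖ ≤ ∫ ω, rexp (-1) * rexp (α * |X ω|) ∂μ := by
        rw [hsub]
        exact norm_integral_le_of_norm_le (hint.const_mul _)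
          (ae_of_all _ fun ω ↦ norm_cexp_mul_sub_one_le hw (X ω))
    _ = rexp (-1) * ∫ ω, rexp (α * |X ω|) ∂μ := integral_const_mul _ _

end ExpAbsIntegrable

/-- If `E e^{α|X|} ≤ 2` (`α > 0`) and `K(z) = log E e^{zX}` is the log-Laplace transform of
`X`, then for every integer `k ≥ 1` and all `|z| ≤ α/4` one has `|K⁽ᵏ⁾(z)| ≤ 3 k! (4/α)^k`. -/
theorem stmt_6 {Ω : Type*} [MeasurableSpace Ω] {P : Measure Ω} [IsProbabilityMeasure P]
    (X : Ω → ℝ) (hmeas : Measurable X) (α : ℝ) (hα : 0 < α)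
    (hexp : ∫⁻ ω, ENNReal.ofReal (Real.exp (α * |X ω|)) ∂P ≤ 2)
    (K : ℂ → ℂ)
    (hK : ∀ z : ℂ, K z = Complex.log (∫ ω, Complex.exp (z * X ω) ∂P)) :
    ∀ k : ℕ, 1 ≤ k → ∀ z : ℂ, ‖z‖ ≤ α / 4 →
      ‖iteratedDeriv k K z‖ ≤ 3 * (Nat.factorial k) * (4 / α) ^ k := by
  intro k _ z hz
  have hX : AEMeasurable X P := hmeas.aemeasurable
  obtain ⟨hint, hint_le⟩ := integrable_and_integral_le_of_lintegral_ofReal_le (by fun_prop)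
    (ae_of_all _ fun ω ↦ (Real.exp_pos _).le) hexp ENNReal.ofNat_ne_top
  have hnear : ∀ w ∈ closedBall (0 : ℂ) (α / 2), ‖complexMGF X P w - 1‖ ≤ 3 / 4 := fun w hw ↦
    calc ‖complexMGF X P w - 1‖ ≤ rexp (-1) * ∫ ω, rexp (α * |X ω|) ∂P :=
          norm_complexMGF_sub_one_le hX hint (mem_closedBall_zero_iff.1 hw)
      _ ≤ rexp (-1) * 2 := by gcongr; simpa using hint_le
      _ ≤ 3 / 4 := by
        rw [Real.exp_neg, inv_mul_le_iff₀ (Real.exp_pos 1)]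
        linarith [Real.exp_one_gt_d9]
  have hdiff : DifferentiableOn ℂ K (closedBall 0 (α / 2)) := by
    rw [show K = fun w ↦ Complex.log (complexMGF X P w) from funext hK]
    refine (differentiableOn_complexMGF_closedBall hX hint (by linarith)).clog fun w hw ↦ ?_
    simpa using Complex.mem_slitPlane_of_norm_lt_one ((hnear w hw).trans_lt (by norm_num))
  have hbound : ∀ w ∈ closedBall (0 : ℂ) (α / 2), ‖K w‖ ≤ 3 := fun w hw ↦
    hK w ▸ Complex.norm_log_le_three_of_norm_sub_one_le (hnear w hw)
  have hball : closedBall z (α / 4) ⊆ closedBall 0 (α / 2) :=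
    closedBall_subset_closedBall' (by rw [dist_zero_right]; linarith)
  calc ‖iteratedDeriv k K z‖ ≤ k.factorial * 3 / (α / 4) ^ k :=
        Complex.norm_iteratedDeriv_le_of_forall_mem_sphere_norm_le k (by positivity)
          (hdiff.diffContOnCl_ball hball) fun w hw ↦ hbound w (hball (sphere_subset_closedBall hw))
    _ = 3 * k.factorial * (4 / α) ^ k := by
        rw [div_eq_mul_inv, ← inv_pow, inv_div]; ring
end

section
/- Let X satisfy E X = 0, E X² = 1, and E e^{α|X|} ≤ 2 (α > 0). Then the third derivative of the log-Laplace transform K(z) = log E e^{zX} satisfies |K'''(z)| ≤ 8/α³ for all complex z with |z| ≤ α/16, and consequently |K''(z) − 1| ≤ 1/2 for |z| ≤ α³/16. -/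
/-!
Write `M` for the complex moment generating function, so that `K = log M`. Since
`t ^ k ≤ (k / (e c)) ^ k * exp (c t)`, the bound `E e^{α|X|} ≤ 2` controls every derivative:
`‖M⁽ᵏ⁾ z‖ ≤ 2 (0.43 k / α) ^ k` on the disc `‖z‖ ≤ α / 8`. With `M 0 = 1`, `M' 0 = E X = 0`
and the mean value inequality this gives `‖M z - 1‖ ≤ 0.11` and `‖M' z‖ ≤ 0.19 / α`, and then
`K''' = M'''/M - 3 M'' M'/M² + 2 (M'/M)³` is at most `8 / α³` on that disc. Finally
`1 = E X² = M'' 0 ≤ 1.48 / α²` forces `α² ≤ 2`, so the disc `‖z‖ ≤ α³ / 16` lies inside it, and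
the mean value inequality from `K'' 0 = E X² = 1` bounds `‖K'' z - 1‖` by `(8 / α³) ‖z‖ ≤ 1/2`.
-/

open MeasureTheory ProbabilityTheory Filter Topology
open scoped ENNReal

theorem pow_le_mul_exp (k : ℕ) {c t : ℝ} (hc : 0 < c) (ht : 0 ≤ t) :
    t ^ k ≤ (k / (Real.exp 1 * c)) ^ k * Real.exp (c * t) := by
  rcases Nat.eq_zero_or_pos k with rfl | hk
  · simpa using Real.one_le_exp (by positivity : 0 ≤ c * t)
  have hk' : (0 : ℝ) < k := by exact_mod_cast hk
  have hy : c * t / k ≤ Real.exp (c * t / k) / Real.exp 1 := by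
    rw [← Real.exp_sub]
    linarith [Real.add_one_le_exp (c * t / k - 1)]
  have ht' : t ≤ k / (Real.exp 1 * c) * Real.exp (c * t / k) := by
    calc t = c * t / k * (k / c) := by field_simp
      _ ≤ Real.exp (c * t / k) / Real.exp 1 * (k / c) := by gcongr
      _ = k / (Real.exp 1 * c) * Real.exp (c * t / k) := by ring
  calc t ^ k ≤ (k / (Real.exp 1 * c) * Real.exp (c * t / k)) ^ k := by gcongr
    _ = (k / (Real.exp 1 * c)) ^ k * Real.exp (c * t) := by
      rw [mul_pow, ← Real.exp_nat_mul, mul_div_cancel₀ _ hk'.ne']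

theorem pow_abs_mul_exp_le {α β : ℝ} (hβ : β < α) (k : ℕ) (x : ℝ) :
    |x| ^ k * Real.exp (β * |x|) ≤ (k / (Real.exp 1 * (α - β))) ^ k * Real.exp (α * |x|) :=
  calc |x| ^ k * Real.exp (β * |x|)
      ≤ (k / (Real.exp 1 * (α - β))) ^ k * Real.exp ((α - β) * |x|)
          * Real.exp (β * |x|) := by
        gcongr
        exact pow_le_mul_exp k (sub_pos.2 hβ) (abs_nonneg _)
    _ = (k / (Real.exp 1 * (α - β))) ^ k * Real.exp (α * |x|) := by
        rw [mul_assoc, ← Real.exp_add]; ring_nf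

theorem integrable_and_integral_le_of_lintegral_le {Ω : Type*} [MeasurableSpace Ω]
    {P : Measure Ω} {f : Ω → ℝ} (hf : AEStronglyMeasurable f P) (hf0 : 0 ≤ᵐ[P] f)
    {C : ℝ≥0∞} (hC : C ≠ ⊤) (h : ∫⁻ ω, ENNReal.ofReal (f ω) ∂P ≤ C) :
    Integrable f P ∧ ∫ ω, f ω ∂P ≤ C.toReal := by
  refine ⟨⟨hf, (hasFiniteIntegral_iff_ofReal hf0).2 (h.trans_lt hC.lt_top)⟩, ?_⟩
  rw [integral_eq_lintegral_of_nonneg_ae hf0 hf]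
  exact ENNReal.toReal_mono hC h

theorem norm_iteratedDeriv_sub_le {E : Type*} [NormedAddCommGroup E] [NormedSpace ℂ E]
    [CompleteSpace E] {f : ℂ → E} {r C : ℝ} (n : ℕ)
    (hf : ∀ w ∈ Metric.closedBall (0 : ℂ) r, AnalyticAt ℂ f w)
    (hC : ∀ w ∈ Metric.closedBall (0 : ℂ) r, ‖iteratedDeriv (n + 1) f w‖ ≤ C) {z : ℂ}
    (hz : ‖z‖ ≤ r) :
    ‖iteratedDeriv n f z - iteratedDeriv n f 0‖ ≤ C * ‖z‖ := by
  have h0 : (0 : ℂ) ∈ Metric.closedBall 0 r :=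
    Metric.mem_closedBall_self ((norm_nonneg z).trans hz)
  have hdiff (w) (hw : w ∈ Metric.closedBall (0 : ℂ) r) :
      DifferentiableAt ℂ (iteratedDeriv n f) w := by
    rw [iteratedDeriv_eq_iterate]
    exact ((hf w hw).iterated_deriv n).differentiableAt
  simpa using (convex_closedBall (0 : ℂ) r).norm_image_sub_le_of_norm_deriv_le hdiff
    (fun w hw ↦ by rw [← iteratedDeriv_succ]; exact hC w hw) h0 (by simpa using hz)

section Log

variable {f : ℂ → ℂ} {z : ℂ}

theorem deriv_clog_comp_eventuallyEq (hf : AnalyticAt ℂ f z) (hz : f z ∈ Complex.slitPlane) :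
    deriv (fun w ↦ Complex.log (f w)) =ᶠ[𝓝 z] fun w ↦ deriv f w / f w := by
  filter_upwards [hf.eventually_analyticAt,
    hf.continuousAt.eventually_mem (Complex.isOpen_slitPlane.mem_nhds hz)] with w hfw hw
  exact (hfw.differentiableAt.hasDerivAt.clog hw).deriv

theorem iteratedDeriv_two_clog_comp_eventuallyEq (hf : AnalyticAt ℂ f z)
    (hz : f z ∈ Complex.slitPlane) :
    iteratedDeriv 2 (fun w ↦ Complex.log (f w)) =ᶠ[𝓝 z]
      fun w ↦ iteratedDeriv 2 f w / f w - (deriv f w / f w) ^ 2 := by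
  filter_upwards [(deriv_clog_comp_eventuallyEq hf hz).eventuallyEq_nhds,
    hf.eventually_analyticAt,
    hf.continuousAt.eventually_mem (Complex.isOpen_slitPlane.mem_nhds hz)] with w hlog hfw hw
  have hderiv := hfw.deriv.differentiableAt.hasDerivAt.fun_div hfw.differentiableAt.hasDerivAt
    (Complex.slitPlane_ne_zero hw)
  rw [iteratedDeriv_succ, iteratedDeriv_one, hlog.deriv_eq, hderiv.deriv, iteratedDeriv_succ,
    iteratedDeriv_one]
  field_simp [Complex.slitPlane_ne_zero hw]

theorem iteratedDeriv_three_clog_comp (hf : AnalyticAt ℂ f z) (hz : f z ∈ Complex.slitPlane) :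
    iteratedDeriv 3 (fun w ↦ Complex.log (f w)) z =
      iteratedDeriv 3 f z / f z - 3 * iteratedDeriv 2 f z * deriv f z / f z ^ 2
        + 2 * (deriv f z / f z) ^ 3 := by
  have hf0 := Complex.slitPlane_ne_zero hz
  have h1 := hf.differentiableAt.hasDerivAt
  have h2 := hf.deriv.differentiableAt.hasDerivAt
  have h3 := hf.deriv.deriv.differentiableAt.hasDerivAt
  rw [iteratedDeriv_succ, (iteratedDeriv_two_clog_comp_eventuallyEq hf hz).deriv_eq]
  simp only [iteratedDeriv_succ, iteratedDeriv_zero]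
  rw [((h3.fun_div h1 hf0).fun_sub ((h2.fun_div h1 hf0).fun_pow 2)).deriv]
  simp only [Nat.cast_ofNat, Nat.add_one_sub_one, pow_one]
  field_simp
  ring

theorem norm_iteratedDeriv_three_clog_comp_le (hf : AnalyticAt ℂ f z)
    (hz : f z ∈ Complex.slitPlane) {a b c d : ℝ} (ha : 0 < a) (hfa : a ≤ ‖f z‖)
    (hb : ‖deriv f z‖ ≤ b) (hc : ‖iteratedDeriv 2 f z‖ ≤ c)
    (hd : ‖iteratedDeriv 3 f z‖ ≤ d) :
    ‖iteratedDeriv 3 (fun w ↦ Complex.log (f w)) z‖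
      ≤ d / a + 3 * c * b / a ^ 2 + 2 * (b / a) ^ 3 := by
  have hb0 : 0 ≤ b := (norm_nonneg _).trans hb
  have hc0 : 0 ≤ c := (norm_nonneg _).trans hc
  have hd0 : 0 ≤ d := (norm_nonneg _).trans hd
  rw [iteratedDeriv_three_clog_comp hf hz]
  refine (norm_add_le _ _).trans (add_le_add ((norm_sub_le _ _).trans (add_le_add ?_ ?_)) ?_)
  all_goals simp only [norm_div, norm_mul, norm_pow, Complex.norm_ofNat]
  all_goals gcongr

end Log

namespace ProbabilityTheory

variable {Ω : Type*} [MeasurableSpace Ω] {P : Measure Ω} {X : Ω → ℝ} {α β : ℝ}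

theorem mem_interior_integrableExpSet_of_abs_lt (hX : AEMeasurable X P)
    (hint : Integrable (fun ω ↦ Real.exp (α * |X ω|)) P) {t : ℝ} (ht : |t| < α) :
    t ∈ interior (integrableExpSet X P) := by
  refine interior_maximal (fun s hs ↦ ?_) isOpen_Ioo (abs_lt.1 ht)
  refine hint.mono' (by fun_prop) (ae_of_all _ fun ω ↦ ?_)
  rw [Real.norm_eq_abs, Real.abs_exp, Real.exp_le_exp]
  calc s * X ω ≤ |s| * |X ω| := by rw [← abs_mul]; exact le_abs_self _
    _ ≤ α * |X ω| := by gcongr; exact abs_lt.2 hs |>.le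

theorem analyticAt_complexMGF_of_abs_re_lt (hX : AEMeasurable X P)
    (hint : Integrable (fun ω ↦ Real.exp (α * |X ω|)) P) {z : ℂ} (hz : |z.re| < α) :
    AnalyticAt ℂ (complexMGF X P) z :=
  analyticAt_complexMGF (mem_interior_integrableExpSet_of_abs_lt hX hint hz)

theorem norm_iteratedDeriv_complexMGF_le_of_abs_re_le (hX : AEMeasurable X P)
    (hint : Integrable (fun ω ↦ Real.exp (α * |X ω|)) P) (hβ : β < α) {z : ℂ}
    (hz : |z.re| ≤ β) (k : ℕ) :
    ‖iteratedDeriv k (complexMGF X P) z‖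
      ≤ (k / (Real.exp 1 * (α - β))) ^ k * ∫ ω, Real.exp (α * |X ω|) ∂P := by
  rw [iteratedDeriv_complexMGF (mem_interior_integrableExpSet_of_abs_lt hX hint (hz.trans_lt hβ)),
    ← integral_const_mul]
  refine (norm_integral_le_integral_norm _).trans (integral_mono_of_nonneg
    (ae_of_all _ fun ω ↦ norm_nonneg _) (hint.const_mul _) (ae_of_all _ fun ω ↦ ?_))
  calc ‖(X ω : ℂ) ^ k * Complex.exp (z * X ω)‖ = |X ω| ^ k * Real.exp (z.re * X ω) := by
        simp [Complex.norm_exp]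
    _ ≤ |X ω| ^ k * Real.exp (β * |X ω|) := by
        gcongr _ * Real.exp ?_
        calc z.re * X ω ≤ |z.re| * |X ω| := by rw [← abs_mul]; exact le_abs_self _
          _ ≤ β * |X ω| := by gcongr
    _ ≤ _ := pow_abs_mul_exp_le hβ k (X ω)

theorem iteratedDeriv_complexMGF_zero (h0 : 0 ∈ interior (integrableExpSet X P)) (n : ℕ) :
    iteratedDeriv n (complexMGF X P) 0 = ((∫ ω, X ω ^ n ∂P : ℝ) : ℂ) := by
  rw [iteratedDeriv_complexMGF (by simpa using h0)]
  simp [← integral_complex_ofReal]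

theorem iteratedDeriv_two_log_complexMGF_zero [IsProbabilityMeasure P]
    (h0 : 0 ∈ interior (integrableExpSet X P)) (hmean : ∫ ω, X ω ∂P = 0)
    (hvar : ∫ ω, X ω ^ 2 ∂P = 1) :
    iteratedDeriv 2 (fun w ↦ Complex.log (complexMGF X P w)) 0 = 1 := by
  have hM0 : complexMGF X P 0 = 1 := by simp [complexMGF]
  rw [(iteratedDeriv_two_clog_comp_eventuallyEq (analyticAt_complexMGF (by simpa using h0))
    (by simp [hM0])).eq_of_nhds, ← iteratedDeriv_one, iteratedDeriv_complexMGF_zero h0,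
    iteratedDeriv_complexMGF_zero h0, hM0]
  simp [hmean, hvar]

structure ExpMomentBound (X : Ω → ℝ) (P : Measure Ω) (α : ℝ) : Prop where
  aemeasurable : AEMeasurable X P
  pos : 0 < α
  integrable : Integrable (fun ω ↦ Real.exp (α * |X ω|)) P
  integral_le : ∫ ω, Real.exp (α * |X ω|) ∂P ≤ 2

namespace ExpMomentBound

variable {z : ℂ}

theorem zero_mem_interior_integrableExpSet (h : ExpMomentBound X P α) :
    0 ∈ interior (integrableExpSet X P) :=
  mem_interior_integrableExpSet_of_abs_lt h.aemeasurable h.integrable (by simpa using h.pos)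

theorem analyticAt_complexMGF (h : ExpMomentBound X P α) (hz : ‖z‖ ≤ α / 8) :
    AnalyticAt ℂ (complexMGF X P) z :=
  analyticAt_complexMGF_of_abs_re_lt h.aemeasurable h.integrable
    ((Complex.abs_re_le_norm z).trans_lt (by linarith [h.pos]))

-- `0.43 ≥ 8 / (7e)`, so this is `norm_iteratedDeriv_complexMGF_le_of_abs_re_le` at `β = α / 8`.
theorem norm_iteratedDeriv_complexMGF_le (h : ExpMomentBound X P α) (hz : ‖z‖ ≤ α / 8)
    (k : ℕ) : ‖iteratedDeriv k (complexMGF X P) z‖ ≤ 2 * (0.43 * k / α) ^ k := by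
  have hα := h.pos
  refine (norm_iteratedDeriv_complexMGF_le_of_abs_re_le h.aemeasurable h.integrable
    (β := α / 8) (by linarith) ((Complex.abs_re_le_norm z).trans hz) k).trans ?_
  have he : 8 / (7 * Real.exp 1) ≤ 0.43 := by
    rw [div_le_iff₀ (by positivity)]
    linarith [Real.exp_one_gt_d9]
  have hk : k / (Real.exp 1 * (α - α / 8)) = 8 / (7 * Real.exp 1) * k / α := by
    field_simp
    ring
  rw [hk, mul_comm]
  gcongr
  exact h.integral_le

theorem norm_iteratedDeriv_complexMGF_sub_le (h : ExpMomentBound X P α) (hz : ‖z‖ ≤ α / 8)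
    (n : ℕ) :
    ‖iteratedDeriv n (complexMGF X P) z - iteratedDeriv n (complexMGF X P) 0‖
      ≤ 2 * (0.43 * (n + 1) / α) ^ (n + 1) * ‖z‖ :=
  norm_iteratedDeriv_sub_le n (fun w hw ↦ h.analyticAt_complexMGF (mem_closedBall_zero_iff.1 hw))
    (fun w hw ↦ by
      exact_mod_cast h.norm_iteratedDeriv_complexMGF_le (mem_closedBall_zero_iff.1 hw) (n + 1))
    hz

theorem norm_complexMGF_sub_one_le [IsProbabilityMeasure P] (h : ExpMomentBound X P α)
    (hz : ‖z‖ ≤ α / 8) : ‖complexMGF X P z - 1‖ ≤ 0.11 := by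
  have hα := h.pos
  have hM0 : complexMGF X P 0 = 1 := by simp [complexMGF]
  have hM := h.norm_iteratedDeriv_complexMGF_sub_le hz 0
  rw [iteratedDeriv_zero, hM0] at hM
  calc _ ≤ 2 * (0.43 / α) * ‖z‖ := by simpa using hM
    _ ≤ 2 * (0.43 / α) * (α / 8) := by gcongr
    _ = 0.1075 := by field_simp; norm_num
    _ ≤ 0.11 := by norm_num

theorem norm_deriv_complexMGF_le (h : ExpMomentBound X P α) (hmean : ∫ ω, X ω ∂P = 0)
    (hz : ‖z‖ ≤ α / 8) : ‖deriv (complexMGF X P) z‖ ≤ 0.19 / α := by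
  have hα := h.pos
  have hM := h.norm_iteratedDeriv_complexMGF_sub_le hz 1
  rw [iteratedDeriv_complexMGF_zero h.zero_mem_interior_integrableExpSet, iteratedDeriv_one] at hM
  simp only [pow_one, hmean, Complex.ofReal_zero, sub_zero] at hM
  calc _ ≤ 2 * (0.86 / α) ^ 2 * ‖z‖ := by norm_num at hM ⊢; exact hM
    _ ≤ 2 * (0.86 / α) ^ 2 * (α / 8) := by gcongr
    _ = 0.1849 / α := by field_simp; norm_num
    _ ≤ 0.19 / α := by gcongr; norm_num

theorem complexMGF_mem_slitPlane [IsProbabilityMeasure P] (h : ExpMomentBound X P α)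
    (hz : ‖z‖ ≤ α / 8) : complexMGF X P z ∈ Complex.slitPlane := by
  refine Complex.ball_one_subset_slitPlane ?_
  rw [Metric.mem_ball, dist_eq_norm]
  linarith [h.norm_complexMGF_sub_one_le hz]

theorem analyticAt_log_complexMGF [IsProbabilityMeasure P] (h : ExpMomentBound X P α)
    (hz : ‖z‖ ≤ α / 8) : AnalyticAt ℂ (fun w ↦ Complex.log (complexMGF X P w)) z :=
  (h.analyticAt_complexMGF hz).clog (h.complexMGF_mem_slitPlane hz)

theorem norm_iteratedDeriv_three_log_complexMGF_le [IsProbabilityMeasure P]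
    (h : ExpMomentBound X P α) (hmean : ∫ ω, X ω ∂P = 0) (hz : ‖z‖ ≤ α / 8) :
    ‖iteratedDeriv 3 (fun w ↦ Complex.log (complexMGF X P w)) z‖ ≤ 8 / α ^ 3 := by
  have hα := h.pos
  have hM : 0.89 ≤ ‖complexMGF X P z‖ := by
    linarith [h.norm_complexMGF_sub_one_le hz, norm_sub_norm_le (1 : ℂ) (complexMGF X P z),
      norm_sub_rev (1 : ℂ) (complexMGF X P z), norm_one (α := ℂ)]
  have hM2 : ‖iteratedDeriv 2 (complexMGF X P) z‖ ≤ 1.48 / α ^ 2 := by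
    refine (h.norm_iteratedDeriv_complexMGF_le hz 2).trans ?_
    rw [div_pow, ← mul_div_assoc]
    gcongr
    norm_num
  have hM3 : ‖iteratedDeriv 3 (complexMGF X P) z‖ ≤ 4.3 / α ^ 3 := by
    refine (h.norm_iteratedDeriv_complexMGF_le hz 3).trans ?_
    rw [div_pow, ← mul_div_assoc]
    gcongr
    norm_num
  calc _ ≤ 4.3 / α ^ 3 / 0.89 + 3 * (1.48 / α ^ 2) * (0.19 / α) / 0.89 ^ 2
        + 2 * (0.19 / α / 0.89) ^ 3 :=
      norm_iteratedDeriv_three_clog_comp_le (h.analyticAt_complexMGF hz)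
        (h.complexMGF_mem_slitPlane hz) (by norm_num) hM (h.norm_deriv_complexMGF_le hmean hz)
        hM2 hM3
    _ = (4.3 / 0.89 + 3 * 1.48 * 0.19 / 0.89 ^ 2 + 2 * (0.19 / 0.89) ^ 3) / α ^ 3 := by
      field_simp
    _ ≤ 8 / α ^ 3 := by gcongr; norm_num

theorem sq_le_two (h : ExpMomentBound X P α) (hvar : ∫ ω, X ω ^ 2 ∂P = 1) :
    α ^ 2 ≤ 2 := by
  have hα := h.pos
  have hM := h.norm_iteratedDeriv_complexMGF_le (z := 0) (by simp; positivity) 2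
  rw [iteratedDeriv_complexMGF_zero h.zero_mem_interior_integrableExpSet, hvar] at hM
  norm_num [div_pow] at hM
  rw [← mul_div_assoc, le_div_iff₀ (by positivity)] at hM
  linarith

end ExpMomentBound

end ProbabilityTheory

/-- If `E X = 0`, `E X² = 1` and `E e^{α|X|} ≤ 2` (`α > 0`), then the log-Laplace transform
`K(z) = log E e^{zX}` satisfies `|K'''(z)| ≤ 8/α³` on `|z| ≤ α/16`, and consequently
`|K''(z) − 1| ≤ 1/2` on `|z| ≤ α³/16`. -/
theorem stmt_7 {Ω : Type*} [MeasurableSpace Ω] {P : Measure Ω} [IsProbabilityMeasure P]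
    (X : Ω → ℝ) (hmeas : Measurable X) (α : ℝ) (hα : 0 < α)
    (hmean : ∫ ω, X ω ∂P = 0) (hvar : ∫ ω, (X ω) ^ 2 ∂P = 1)
    (hexp : ∫⁻ ω, ENNReal.ofReal (Real.exp (α * |X ω|)) ∂P ≤ 2)
    (K : ℂ → ℂ)
    (hK : ∀ z : ℂ, K z = Complex.log (∫ ω, Complex.exp (z * X ω) ∂P)) :
    (∀ z : ℂ, ‖z‖ ≤ α / 16 → ‖iteratedDeriv 3 K z‖ ≤ 8 / α ^ 3) ∧
    (∀ z : ℂ, ‖z‖ ≤ α ^ 3 / 16 → ‖iteratedDeriv 2 K z - 1‖ ≤ 1 / 2) := by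
  obtain ⟨hint, hint_le⟩ : Integrable (fun ω ↦ Real.exp (α * |X ω|)) P ∧
      ∫ ω, Real.exp (α * |X ω|) ∂P ≤ 2 := by
    simpa using integrable_and_integral_le_of_lintegral_le (by fun_prop)
      (ae_of_all _ fun ω ↦ (Real.exp_pos _).le) (by simp) hexp
  have h : ExpMomentBound X P α := ⟨hmeas.aemeasurable, hα, hint, hint_le⟩
  obtain rfl : K = fun z ↦ Complex.log (complexMGF X P z) := funext hK
  have hK3 (z : ℂ) (hz : ‖z‖ ≤ α / 8) :=
    h.norm_iteratedDeriv_three_log_complexMGF_le hmean hz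
  refine ⟨fun z hz ↦ hK3 z (hz.trans (by linarith)), fun z hz ↦ ?_⟩
  have hα2 := h.sq_le_two hvar
  have hz8 : ‖z‖ ≤ α / 8 := hz.trans (by nlinarith)
  calc _ = ‖iteratedDeriv 2 _ z - iteratedDeriv 2 _ 0‖ := by
        rw [iteratedDeriv_two_log_complexMGF_zero h.zero_mem_interior_integrableExpSet hmean hvar]
    _ ≤ 8 / α ^ 3 * ‖z‖ := norm_iteratedDeriv_sub_le 2
        (fun w hw ↦ h.analyticAt_log_complexMGF (mem_closedBall_zero_iff.1 hw))
        (fun w hw ↦ hK3 w (mem_closedBall_zero_iff.1 hw)) hz8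
    _ ≤ 8 / α ^ 3 * (α ^ 3 / 16) := by gcongr
    _ = 1 / 2 := by field_simp; norm_num
end

section
/- If |y| ≤ |t|/2 and |t| ≤ 1/4, then for z = t + iy, |1 − z²/2| ≤ 1 − t²/3. -/
open Complex

theorem normSq_one_sub_sq_div_two (t y : ℝ) :
    normSq (1 - ((t : ℂ) + y * I) ^ 2 / 2) =
      1 - (t ^ 2 - y ^ 2) + (t ^ 2 - y ^ 2) ^ 2 / 4 + (t * y) ^ 2 := by
  have hre : (1 - ((t : ℂ) + y * I) ^ 2 / 2).re = 1 - (t ^ 2 - y ^ 2) / 2 := by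
    simp [sq]
  have him : (1 - ((t : ℂ) + y * I) ^ 2 / 2).im = -(t * y) := by
    simp only [sq, sub_im, one_im, div_ofNat_im, mul_im, add_re, ofReal_re, mul_re, I_re, mul_zero,
      ofReal_im, I_im, mul_one, sub_self, add_zero, add_im, zero_add, zero_sub, neg_inj]
    ring
  rw [normSq_apply, hre, him]
  ring

/-- The squared norm is `1 - t² + y² + (t² + y²)² / 4`; bound `y²` by `t² / 4`, and the quartic
term is absorbed because `t² ≤ 1/16`. -/
theorem normSq_one_sub_sq_div_two_le (t y : ℝ) (hy : y ^ 2 ≤ t ^ 2 / 4) (ht : t ^ 2 ≤ 1 / 16) :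
    normSq (1 - ((t : ℂ) + y * I) ^ 2 / 2) ≤ (1 - t ^ 2 / 3) ^ 2 := by
  rw [normSq_one_sub_sq_div_two]
  nlinarith [sq_nonneg t, sq_nonneg y, mul_nonneg (sq_nonneg t) (sq_nonneg y)]

/-- If `|y| ≤ |t|/2` and `|t| ≤ 1/4`, then for `z = t + iy`, `|1 − z²/2| ≤ 1 − t²/3`. -/
theorem stmt_9 (t y : ℝ) (hy : |y| ≤ |t| / 2) (ht : |t| ≤ 1 / 4) :
    ‖1 - ((t : ℂ) + y * Complex.I) ^ 2 / 2‖ ≤ 1 - t ^ 2 / 3 := by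
  have hy2 : y ^ 2 ≤ (t / 2) ^ 2 := sq_le_sq.mpr (by rwa [abs_div, abs_two])
  have ht2 : t ^ 2 ≤ (1 / 4) ^ 2 := sq_le_sq.mpr (by rwa [abs_of_pos (by norm_num : (0 : ℝ) < 1 / 4)])
  rw [norm_def, Real.sqrt_le_iff]
  exact ⟨by nlinarith, normSq_one_sub_sq_div_two_le t y (by linarith) (by linarith)⟩
end

section
/- If X is a real random variable with E X² = 1 and E e^{α|X|} ≤ 2 for some α > 0, then α < 1. In fact, E X² = 1 implies E e^{|X|} > 2.36, so that E e^{|X|} > 2. -/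
/-!
For `x ≥ 0` the Taylor polynomial of `exp` of degree five already dominates `1 + 3x²/2`, so
`E e^{|X|} ≥ 1 + (3/2) E X² = 5/2 > 2.36`. If `α ≥ 1` then `e^{|X|} ≤ e^{α|X|}`, so
`E e^{α|X|} ≤ 2` would contradict this bound.
-/

open MeasureTheory ProbabilityTheory

lemma Real.one_add_three_halves_mul_sq_le_exp {x : ℝ} (hx : 0 ≤ x) :
    1 + 3 / 2 * x ^ 2 ≤ Real.exp x := by
  have h := Real.sum_le_exp_of_nonneg hx 6
  norm_num [Finset.sum_range_succ, Nat.factorial] at h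
  nlinarith [mul_nonneg hx (sq_nonneg (x ^ 2 + 5 / 2 * x - 65 / 8)),
    mul_nonneg hx (sq_nonneg (x - 127 / 96))]

lemma ofReal_one_add_three_halves_mul_integral_sq_le_lintegral_exp_abs {Ω : Type*}
    [MeasurableSpace Ω] {P : Measure Ω} [IsProbabilityMeasure P] {X : Ω → ℝ}
    (hX : Integrable (fun ω ↦ X ω ^ 2) P) :
    ENNReal.ofReal (1 + 3 / 2 * ∫ ω, X ω ^ 2 ∂P) ≤
      ∫⁻ ω, ENNReal.ofReal (Real.exp |X ω|) ∂P := by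
  have hint : Integrable (fun ω ↦ 1 + 3 / 2 * X ω ^ 2) P :=
    (integrable_const 1).add (hX.const_mul _)
  calc ENNReal.ofReal (1 + 3 / 2 * ∫ ω, X ω ^ 2 ∂P)
      = ENNReal.ofReal (∫ ω, 1 + 3 / 2 * X ω ^ 2 ∂P) := by
        rw [integral_add (integrable_const 1) (hX.const_mul _), integral_const_mul]
        simp
    _ = ∫⁻ ω, ENNReal.ofReal (1 + 3 / 2 * X ω ^ 2) ∂P :=
        ofReal_integral_eq_lintegral_ofReal hint (.of_forall fun ω ↦ by positivity)
    _ ≤ ∫⁻ ω, ENNReal.ofReal (Real.exp |X ω|) ∂P := by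
        refine lintegral_mono fun ω ↦ ENNReal.ofReal_le_ofReal ?_
        simpa only [sq_abs] using Real.one_add_three_halves_mul_sq_le_exp (abs_nonneg (X ω))

theorem stmt_10_general {Ω : Type*} [MeasurableSpace Ω] {P : Measure Ω} [IsProbabilityMeasure P]
    (X : Ω → ℝ) (α : ℝ)
    (hvar : ∫ ω, (X ω) ^ 2 ∂P = 1)
    (hexp : ∫⁻ ω, ENNReal.ofReal (Real.exp (α * |X ω|)) ∂P ≤ 2) :
    α < 1 ∧ ENNReal.ofReal 2.36 < ∫⁻ ω, ENNReal.ofReal (Real.exp |X ω|) ∂P := by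
  have hbound : ENNReal.ofReal 2.36 < ∫⁻ ω, ENNReal.ofReal (Real.exp |X ω|) ∂P := by
    refine lt_of_lt_of_le ?_ <| ofReal_one_add_three_halves_mul_integral_sq_le_lintegral_exp_abs
      (.of_integral_ne_zero (hvar ▸ one_ne_zero))
    rw [hvar, ENNReal.ofReal_lt_ofReal_iff (by norm_num)]
    norm_num
  refine ⟨?_, hbound⟩
  by_contra! hα
  have hmono : ∫⁻ ω, ENNReal.ofReal (Real.exp |X ω|) ∂P ≤
      ∫⁻ ω, ENNReal.ofReal (Real.exp (α * |X ω|)) ∂P :=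
    lintegral_mono fun ω ↦ ENNReal.ofReal_le_ofReal <|
      Real.exp_le_exp.mpr (le_mul_of_one_le_left (abs_nonneg _) hα)
  have h := (hbound.trans_le (hmono.trans hexp)).trans_eq (ENNReal.ofReal_ofNat 2).symm
  rw [ENNReal.ofReal_lt_ofReal_iff (by norm_num)] at h
  norm_num at h

/-- If `E X² = 1` and `E e^{α|X|} ≤ 2` for some `α > 0`, then `α < 1`; in fact
`E X² = 1` forces `E e^{|X|} > 2.36 > 2`. -/
theorem stmt_10 {Ω : Type*} [MeasurableSpace Ω] {P : Measure Ω} [IsProbabilityMeasure P]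
    (X : Ω → ℝ) (hmeas : Measurable X) (α : ℝ) (hα : 0 < α)
    (hvar : ∫ ω, (X ω) ^ 2 ∂P = 1)
    (hexp : ∫⁻ ω, ENNReal.ofReal (Real.exp (α * |X ω|)) ∂P ≤ 2) :
    α < 1 ∧ ENNReal.ofReal 2.36 < ∫⁻ ω, ENNReal.ofReal (Real.exp |X ω|) ∂P :=
  stmt_10_general X α hvar hexp
end
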